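/- arXiv:1910.10001 — 6 statements merged into one kernel-verified Lean document; each statement's English description precedes it below -/
import Mathlib

section
/- Let f : P → Q be an order-preserving map of finite posets such that for every q ∈ Q, the preimage of the principal order ideal Q_{≤q} is again a principal order ideal of P (i.e., has a unique maximal element). Then for any surjective morphism of functors (sheaves) φ : F → G from P to an abelian category (say, abelian groups), the induced morphism of direct-image sheaves f_*φ : f_*F → f_*G is surjective on every stalk; hence the direct image functor f_* is exact. -/
/-- Compatibility of a family of local sections of a sheaf on a poset
(a functor with restriction maps going downwards) over a subset `U`. -/
def SheafCompat {P : Type} [PartialOrder P] (F : P → Type)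
    [∀ x, AddCommGroup (F x)] (resF : ∀ {x y : P}, x ≤ y → F y →+ F x)
    (U : Set P) (s : ∀ x ∈ U, F x) : Prop :=
  ∀ x y (hx : x ∈ U) (hy : y ∈ U) (hxy : x ≤ y), resF hxy (s y hy) = s x hx

/-- The sections of a sheaf on a poset over a subset `U`: compatible families. -/
def SheafSections {P : Type} [PartialOrder P] (F : P → Type)
    [∀ x, AddCommGroup (F x)] (resF : ∀ {x y : P}, x ≤ y → F y →+ F x)
    (U : Set P) : Type :=
  {s : ∀ x ∈ U, F x // SheafCompat F resF U s}

/-- let `f : P → Q` be monotone between finite posets such that the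
preimage of every principal order ideal `Q_{≤ q}` is a principal order ideal
(has a greatest element).  Then for every surjective morphism of sheaves
`φ : F → G` on `P`, the induced morphism of direct images `f_*φ` is surjective
on every stalk; the stalk of `f_*F` at `q` is the space of sections of `F` over
`f⁻¹(Q_{≤ q})`.  (Hence `f_*` is exact.) -/
theorem direct_image_surjective_on_stalks {P Q : Type} [PartialOrder P] [PartialOrder Q]
    [Fintype P] [Fintype Q]
    (F G : P → Type) [∀ x, AddCommGroup (F x)] [∀ x, AddCommGroup (G x)]
    (resF : ∀ {x y : P}, x ≤ y → F y →+ F x) (resG : ∀ {x y : P}, x ≤ y → G y →+ G x)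
    (hresF_id : ∀ x : P, resF (le_refl x) = AddMonoidHom.id (F x))
    (hresF_comp : ∀ {x y z : P} (h₁ : x ≤ y) (h₂ : y ≤ z),
      (resF h₁).comp (resF h₂) = resF (le_trans h₁ h₂))
    (hresG_id : ∀ x : P, resG (le_refl x) = AddMonoidHom.id (G x))
    (hresG_comp : ∀ {x y z : P} (h₁ : x ≤ y) (h₂ : y ≤ z),
      (resG h₁).comp (resG h₂) = resG (le_trans h₁ h₂))
    (f : P → Q) (hf : Monotone f)
    (hfib : ∀ q : Q, ∃ m : P, f m ≤ q ∧ ∀ x : P, f x ≤ q → x ≤ m)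
    (φ : ∀ x, F x →+ G x)
    (hnat : ∀ {x y : P} (h : x ≤ y) (a : F y), φ x (resF h a) = resG h (φ y a))
    (hsurj : ∀ x, Function.Surjective (φ x)) :
    ∀ q : Q,
      Function.Surjective
        (fun s : SheafSections F resF {x : P | f x ≤ q} =>
          (⟨fun x hx => φ x (s.1 x hx), by
              intro x y hx hy hxy
              rw [← hnat]
              exact congrArg (φ x) (s.2 x y hx hy hxy)⟩ :
            SheafSections G resG {x : P | f x ≤ q})) := by
  intro q t
  obtain ⟨m, hm, hmax⟩ := hfib q
  obtain ⟨a, ha⟩ := hsurj m (t.1 m hm)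
  refine ⟨⟨fun x hx => resF (hmax x hx) a, ?_⟩, ?_⟩
  · intro x y hx hy hxy
    have := congrArg (fun g : F _ →+ F _ => g a) (hresF_comp hxy (hmax y hy))
    simpa using this
  · apply Subtype.ext
    funext x hx
    show φ x (resF (hmax x hx) a) = t.1 x hx
    rw [hnat, ha]
    exact t.2 x m hx hm (hmax x hx)
end

section
/- Let f : P → Q be a map of finite posets such that every fibre f^{-1}(q) is nonempty with connected order complex, and is initial in the sense that f^{-1}(Q_{≤q}) = ⋃_{x ∈ f^{-1}(q)} P_{≤x}. Then for every sheaf F on Q, the adjunction unit η : F → f_* f^* F is an isomorphism. -/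
/-- let `f : P → Q` be a monotone map of finite posets such that
every fibre `f⁻¹(q)` is nonempty with connected order complex (any two points
are joined by a zigzag of comparabilities) and initial (every `x` with
`f x ≤ q` lies below some point of the fibre).  Then for every sheaf `F` on `Q`
the adjunction unit `η : F → f_* f^* F` is an isomorphism: on each stalk `F q`,
the canonical map to the sections of `f^*F` over `f⁻¹(Q_{≤q})` is bijective
(injective, and surjective onto compatible families). -/
theorem adjunction_unit_iso {P Q : Type} [PartialOrder P] [PartialOrder Q]
    [Fintype P] [Fintype Q]
    (f : P → Q) (hf : Monotone f)
    (hne : ∀ q : Q, Nonempty {x : P // f x = q})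
    (hconn : ∀ (q : Q) (a b : {x : P // f x = q}),
      Relation.ReflTransGen (fun u v : {x : P // f x = q} => u.1 ≤ v.1 ∨ v.1 ≤ u.1) a b)
    (hinitial : ∀ (q : Q) (x : P), f x ≤ q → ∃ x' : P, f x' = q ∧ x ≤ x')
    (F : Q → Type) [∀ q, AddCommGroup (F q)]
    (res : ∀ {a b : Q}, a ≤ b → F b →+ F a)
    (hres_id : ∀ a : Q, res (le_refl a) = AddMonoidHom.id (F a))
    (hres_comp : ∀ {a b c : Q} (h₁ : a ≤ b) (h₂ : b ≤ c),
      (res h₁).comp (res h₂) = res (le_trans h₁ h₂)) :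
    ∀ q : Q,
      (∀ a b : F q, (∀ (p : P) (hp : f p ≤ q), res hp a = res hp b) → a = b) ∧
      (∀ s : ∀ p : P, f p ≤ q → F (f p),
        (∀ (p p' : P) (hp : f p ≤ q) (hp' : f p' ≤ q) (h : p ≤ p'),
          res (hf h) (s p' hp') = s p hp) →
        ∃ a : F q, ∀ (p : P) (hp : f p ≤ q), res hp a = s p hp) := by
  intro q
  obtain ⟨⟨x₀, hx₀⟩⟩ := hne q
  subst hx₀
  have resid : ∀ (a : Q) (h : a ≤ a) (z : F a), res h z = z := by
    intro a h z
    have h1 : res h z = res (le_refl a) z := rfl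
    rw [h1, hres_id a]; rfl
  have rescomp : ∀ {a b c : Q} (h₁ : a ≤ b) (h₂ : b ≤ c) (z : F c),
      res h₁ (res h₂ z) = res (le_trans h₁ h₂) z := by
    intro a b c h₁ h₂ z
    exact DFunLike.congr_fun (hres_comp h₁ h₂) z
  constructor
  · intro a b h
    have := h x₀ (le_refl (f x₀))
    rwa [resid _ _ a, resid _ _ b] at this
  · intro s hs
    refine ⟨s x₀ le_rfl, ?_⟩
    have good : ∀ x : {x : P // f x = f x₀}, ∀ hp : f x.1 ≤ f x₀,
        res hp (s x₀ le_rfl) = s x.1 hp := by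
      intro x
      induction hconn (f x₀) ⟨x₀, rfl⟩ x with
      | refl => intro hp; rw [resid]
      | tail _hab hrel ih =>
        rename_i u v
        rcases hrel with h | h
        · intro hp
          have h2 : f v.1 ≤ f u.1 := le_of_eq (v.2.trans u.2.symm)
          have hinj : ∀ z z' : F (f v.1),
              res (hf h) z = res (hf h) z' → z = z' := by
            intro z z' hzz
            have := congrArg (res h2) hzz
            rw [rescomp h2 (hf h) z, rescomp h2 (hf h) z',
              resid _ _ z, resid _ _ z'] at this
            exact this
          apply hinj
          rw [rescomp (hf h) hp]
          have hp' : f u.1 ≤ f x₀ := le_of_eq u.2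
          rw [hs u.1 v.1 hp' hp h]
          exact ih (le_trans (hf h) hp)
        · intro hp
          have hp' : f u.1 ≤ f x₀ := le_of_eq u.2
          rw [← hs v.1 u.1 hp hp' h, ← ih hp', rescomp (hf h) hp']
    intro p hp
    obtain ⟨x', hx', hpx'⟩ := hinitial (f x₀) p hp
    have hp' : f x' ≤ f x₀ := le_of_eq hx'
    rw [← hs p x' hp hp' hpx', ← good ⟨x', hx'⟩ hp', rescomp (hf hpx') hp']
end

section
/- Let L be a finite meet-semilattice and p an element of L with p > ⊥. Define L_(p) = {x ∈ L : x ≱ p and p ∨ x exists in L}, and let Bl_p(L) = {x ∈ L : x ≱ p} ∪ {(p,x) : x ∈ L_(p)} with order relations: y > x if y > x in L; (p,y) > (p,x) if y > x in L; (p,y) > x if y ≥ x in L (all with x, y ≱ p). Then Bl_p(L) is again a meet-semilattice. -/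
/-- Membership predicate for the carrier of the combinatorial blowup `Bl_p(L)`:
`inl x` stands for an element `x ∈ L` with `x ≱ p`, and `inr x` stands for the
new pair `(p, x)` where `x ≱ p` and the join `p ∨ x` exists in `L`. -/
def BlowupMem {L : Type} [SemilatticeInf L] (p : L) : L ⊕ L → Prop
  | .inl x => ¬ p ≤ x
  | .inr x => ¬ p ≤ x ∧ ∃ j, IsLUB {p, x} j

/-- The combinatorial blowup of a meet-semilattice `L` at `p` (Feichtner–Kozlov). -/
def Blowup (L : Type) [SemilatticeInf L] (p : L) : Type :=
  {z : L ⊕ L // BlowupMem p z}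

/-- The order relation of the combinatorial blowup. -/
def bleRel {L : Type} [SemilatticeInf L] : L ⊕ L → L ⊕ L → Prop
  | .inl x, .inl y => x ≤ y
  | .inl x, .inr y => x ≤ y
  | .inr x, .inr y => x ≤ y
  | .inr _, .inl _ => False

instance {L : Type} [SemilatticeInf L] (p : L) : PartialOrder (Blowup L p) where
  le a b := bleRel a.1 b.1
  le_refl a := by rcases a with ⟨(x | x), h⟩ <;> simp [bleRel]
  le_trans a b c hab hbc := by
    rcases a with ⟨(x | x), hx⟩ <;> rcases b with ⟨(y | y), hy⟩ <;>
      rcases c with ⟨(z | z), hz⟩ <;>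
      simp only [bleRel] at * <;>
      first
        | exact le_trans hab hbc
        | exact hbc.elim
        | exact hab.elim
  le_antisymm a b hab hba := by
    rcases a with ⟨(x | x), hx⟩ <;> rcases b with ⟨(y | y), hy⟩ <;>
      simp only [bleRel] at * <;>
      first
        | exact Subtype.ext (congrArg Sum.inl (le_antisymm hab hba))
        | exact Subtype.ext (congrArg Sum.inr (le_antisymm hab hba))
        | exact hab.elim
        | exact hba.elim

/-- the combinatorial blowup of a finite meet-semilattice at an
element `p > ⊥` is again a meet-semilattice: every pair of elements has a
greatest lower bound. -/
theorem blowup_is_meet_semilattice {L : Type} [SemilatticeInf L] [OrderBot L] [Fintype L]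
    (p : L) (hp : ⊥ < p) :
    ∀ a b : Blowup L p, ∃ m : Blowup L p, IsGLB {a, b} m := by
  classical
  -- auxiliary: any pair with an upper bound has a LUB (finiteness)
  have lub_exists : ∀ u v : L, (∃ j, u ≤ j ∧ v ≤ j) → ∃ m, IsLUB {u, v} m := by
    intro u v ⟨j, hj1, hj2⟩
    have hne : (Finset.univ.filter (fun w => u ≤ w ∧ v ≤ w)).Nonempty :=
      ⟨j, Finset.mem_filter.mpr ⟨Finset.mem_univ _, hj1, hj2⟩⟩
    refine ⟨(Finset.univ.filter (fun w => u ≤ w ∧ v ≤ w)).inf' hne id, ?_, ?_⟩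
    · rintro c (rfl | rfl)
      · exact Finset.le_inf' _ _ (fun w hw => (Finset.mem_filter.mp hw).2.1)
      · exact Finset.le_inf' _ _ (fun w hw => (Finset.mem_filter.mp hw).2.2)
    · intro c hc
      have h1 : u ≤ c := hc (Set.mem_insert _ _)
      have h2 : v ≤ c := hc (Set.mem_insert_of_mem _ rfl)
      exact Finset.inf'_le _ (Finset.mem_filter.mpr ⟨Finset.mem_univ _, h1, h2⟩)
  intro a b
  rcases a with ⟨(x | x), hx⟩ <;> rcases b with ⟨(y | y), hy⟩
  · -- inl, inl
    refine ⟨⟨.inl (x ⊓ y), fun h => hx (h.trans inf_le_left)⟩, ?_, ?_⟩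
    · rintro c (rfl | rfl)
      · exact inf_le_left
      · exact inf_le_right
    · intro c hc
      have h1 := hc (Set.mem_insert _ _)
      have h2 := hc (Set.mem_insert_of_mem _ rfl)
      rcases c with ⟨(z | z), hz⟩
      · exact le_inf h1 h2
      · exact h1.elim
  · -- inl, inr
    refine ⟨⟨.inl (x ⊓ y), fun h => hx (h.trans inf_le_left)⟩, ?_, ?_⟩
    · rintro c (rfl | rfl)
      · exact inf_le_left
      · exact inf_le_right
    · intro c hc
      have h1 := hc (Set.mem_insert _ _)
      have h2 := hc (Set.mem_insert_of_mem _ rfl)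
      rcases c with ⟨(z | z), hz⟩
      · exact le_inf h1 h2
      · exact h1.elim
  · -- inr, inl
    refine ⟨⟨.inl (x ⊓ y), fun h => hy (h.trans inf_le_right)⟩, ?_, ?_⟩
    · rintro c (rfl | rfl)
      · exact inf_le_left
      · exact inf_le_right
    · intro c hc
      have h1 := hc (Set.mem_insert _ _)
      have h2 := hc (Set.mem_insert_of_mem _ rfl)
      rcases c with ⟨(z | z), hz⟩
      · exact le_inf h1 h2
      · exact h2.elim
  · -- inr, inr
    obtain ⟨hx1, j, hj⟩ := hx
    have hpj : p ≤ j := hj.1 (Set.mem_insert _ _)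
    have hxj : x ≤ j := hj.1 (Set.mem_insert_of_mem _ rfl)
    refine ⟨⟨.inr (x ⊓ y), fun h => hx1 (h.trans inf_le_left),
      lub_exists p (x ⊓ y) ⟨j, hpj, inf_le_left.trans hxj⟩⟩, ?_, ?_⟩
    · rintro c (rfl | rfl)
      · exact inf_le_left
      · exact inf_le_right
    · intro c hc
      have h1 := hc (Set.mem_insert _ _)
      have h2 := hc (Set.mem_insert_of_mem _ rfl)
      rcases c with ⟨(z | z), hz⟩
      · exact le_inf h1 h2
      · exact le_inf h1 h2
end

section
/- Let L be a finite meet-semilattice, p ∈ L with p > ⊥, and let α : L_(p) × {0 < 1} → Bl_p(L) be the map sending (x,0) ↦ x and (x,1) ↦ (p,x), where L_(p) = {x ∈ L : x ≱ p and p ∨ x exists}. Then α is an open embedding of posets (its image is a downward-closed subset, and α is an order isomorphism onto its image), and the complement of the image of α in Bl_p(L) is exactly {x ∈ L : p ∨ x does not exist in L}. -/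
/-- The subposet `L_(p) = {x ∈ L : x ≱ p and p ∨ x exists in L}`. -/
def Lp (L : Type) [SemilatticeInf L] (p : L) : Type :=
  {x : L // ¬ p ≤ x ∧ ∃ j, IsLUB {p, x} j}

instance (L : Type) [SemilatticeInf L] (p : L) : PartialOrder (Lp L p) :=
  Subtype.partialOrder _

/-- The map `α : L_(p) × {0 < 1} → Bl_p(L)`, sending `(x,0) ↦ x` and
`(x,1) ↦ (p,x)`. -/
def alphaMap {L : Type} [SemilatticeInf L] (p : L) (q : Lp L p × Bool) : Blowup L p :=
  match q with
  | (x, false) => ⟨Sum.inl x.1, x.2.1⟩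
  | (x, true) => ⟨Sum.inr x.1, x.2⟩

section

variable {L : Type} [SemilatticeInf L]

/-- The least upper bound is the meet of the (finitely many) upper bounds. -/
theorem exists_isLUB_of_bddAbove [Finite L] {s : Set L} (hs : BddAbove s) :
    ∃ m, IsLUB s m := by
  have hfin : (upperBounds s).Finite := Set.toFinite _
  have hne : hfin.toFinset.Nonempty := hfin.toFinset_nonempty.mpr hs
  refine ⟨hfin.toFinset.inf' hne id, fun a ha => ?_, fun u hu => ?_⟩
  · exact Finset.le_inf' hne id fun u hu => (hfin.mem_toFinset.mp hu) ha
  · exact Finset.inf'_le id (hfin.mem_toFinset.mpr hu)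

theorem exists_isLUB_pair_of_le [Finite L] {p x y : L} (hyx : y ≤ x) :
    (∃ j, IsLUB {p, x} j) → ∃ m, IsLUB {p, y} m := fun ⟨j, hj⟩ =>
  exists_isLUB_of_bddAbove ⟨j, by
    rintro a (rfl | rfl)
    · exact hj.1 (Set.mem_insert _ _)
    · exact hyx.trans (hj.1 (Set.mem_insert_of_mem _ rfl))⟩

theorem Blowup.le_def {p : L} {a b : Blowup L p} : a ≤ b ↔ bleRel a.1 b.1 := Iff.rfl

theorem alphaMap_le_alphaMap_iff {p : L} (q r : Lp L p × Bool) :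
    alphaMap p q ≤ alphaMap p r ↔ q ≤ r := by
  obtain ⟨x, _ | _⟩ := q <;> obtain ⟨y, _ | _⟩ := r <;>
    rw [Blowup.le_def] <;> simp [bleRel, alphaMap, Prod.mk_le_mk] <;> rfl

theorem mem_range_alphaMap_iff {p : L} {z : Blowup L p} :
    z ∈ Set.range (alphaMap p) ↔ ∀ x, z.1 = Sum.inl x → ∃ j, IsLUB {p, x} j := by
  constructor
  · rintro ⟨⟨x, _ | _⟩, rfl⟩ y hy
    · cases Sum.inl.inj hy
      exact x.2.2
    · cases hy
  · obtain ⟨x | x, hz⟩ := z <;> intro h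
    · exact ⟨(⟨x, hz, h x rfl⟩, false), rfl⟩
    · exact ⟨(⟨x, hz⟩, true), rfl⟩

/-- Below a point of the image there are only points `inl y` with `y ≤ x`, where `p ∨ x` exists;
then `p ∨ y` exists as well, since `{p, y}` is bounded by `p ∨ x`. -/
theorem isLowerSet_range_alphaMap [Finite L] (p : L) : IsLowerSet (Set.range (alphaMap p)) := by
  intro a b hba ha
  rw [mem_range_alphaMap_iff] at ha ⊢
  obtain ⟨b | b, hb⟩ := b <;> intro y hy <;> cases hy
  obtain ⟨x | x, hx⟩ := a
  · exact exists_isLUB_pair_of_le hba (ha x rfl)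
  · exact exists_isLUB_pair_of_le hba hx.2

theorem compl_range_alphaMap (p : L) :
    (Set.range (alphaMap p))ᶜ =
      {z : Blowup L p | ∃ x : L, z.1 = Sum.inl x ∧ ¬ ∃ j, IsLUB {p, x} j} := by
  ext z
  simp only [Set.mem_compl_iff, mem_range_alphaMap_iff, not_forall, exists_prop]
  rfl

end

theorem alphaMap_open_embedding_general {L : Type} [SemilatticeInf L] [Fintype L]
    (p : L) :
    (∀ q r : Lp L p × Bool, alphaMap p q ≤ alphaMap p r ↔ q ≤ r) ∧
    IsLowerSet (Set.range (alphaMap p)) ∧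
    (Set.range (alphaMap p))ᶜ =
      {z : Blowup L p | ∃ x : L, z.1 = Sum.inl x ∧ ¬ ∃ j, IsLUB {p, x} j} :=
  ⟨alphaMap_le_alphaMap_iff, isLowerSet_range_alphaMap p, compl_range_alphaMap p⟩

/-- `α` is an open embedding of posets: it is an order embedding,
its image is a downward-closed (open) subset of `Bl_p(L)`, and its complement
consists exactly of the elements `x ∈ L` for which `p ∨ x` does not exist. -/
theorem alphaMap_open_embedding {L : Type} [SemilatticeInf L] [OrderBot L] [Fintype L]
    (p : L) (hp : ⊥ < p) :
    (∀ q r : Lp L p × Bool, alphaMap p q ≤ alphaMap p r ↔ q ≤ r) ∧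
    IsLowerSet (Set.range (alphaMap p)) ∧
    (Set.range (alphaMap p))ᶜ =
      {z : Blowup L p | ∃ x : L, z.1 = Sum.inl x ∧ ¬ ∃ j, IsLUB {p, x} j} :=
  alphaMap_open_embedding_general p
end

section
/- Let G be a building set in a geometric lattice L, let y ∈ L with y > ⊥, and let h be an atom of L with h ≰ y. Write F(L,G; y ∨ h) = {x₁,…,x_t} with h ≤ x_t. Then there exists a unique y′ ∈ [⊥, x_t] such that F(L,G; y) = {x₁,…,x_{t−1}} ∪ F(L,G; y′). -/
/-- A finite lattice is geometric if it is atomistic and (upper) semimodular. -/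
def IsGeomLat (L : Type) [Lattice L] [BoundedOrder L] [Fintype L] : Prop :=
  (∀ x : L, IsLUB {a : L | IsAtom a ∧ a ≤ x} x) ∧
  ∀ a b : L, a ⊓ b ⋖ a → b ⋖ a ⊔ b

/-- The set of factors `F(L,G;x) = max G_{≤x}` of an element `x` with respect to
a subset `G ⊆ L`. -/
def factorsOf {L : Type} [Lattice L] [BoundedOrder L] (G : Set L) (x : L) : Set L :=
  {g | g ∈ G ∧ g ≤ x ∧ ∀ h ∈ G, h ≤ x → g ≤ h → g = h}

/-- A combinatorial building set in a (geometric) lattice `L`: a set `G` of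
elements `> ⊥` such that for each `x > ⊥`, the join map from the product of the
lower intervals `[⊥, g]`, `g ∈ max G_{≤x}`, to `[⊥, x]` is a poset isomorphism
sending the `g`-th "unit vector" to `g`. -/
def IsBuildingSet (L : Type) [Lattice L] [BoundedOrder L] [Fintype L] [DecidableEq L]
    (G : Set L) : Prop :=
  (∀ g ∈ G, ⊥ < g) ∧
  ∀ x : L, ⊥ < x →
    ∃ φ : ((g : factorsOf G x) → ↥(Set.Iic (g : L))) ≃o ↥(Set.Iic x),
      ∀ g : factorsOf G x,
        φ (fun h => if hh : h = g then ⟨(g : L), by simp [hh]⟩ else ⟨⊥, bot_le⟩) =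
          ⟨(g : L), g.2.2.1⟩

/-- A partial building set `H` inside a building set `G`: `H ⊆ G`, `H` contains
all atoms, and the non-atomic part of `H` is an order filter of `G`. -/
def IsPartialBuilding (L : Type) [Lattice L] [BoundedOrder L] [Fintype L] [DecidableEq L]
    (G H : Set L) : Prop :=
  H ⊆ G ∧ {a : L | IsAtom a} ⊆ H ∧
  ∀ g ∈ H, ¬ IsAtom g → ∀ h ∈ G, g ≤ h → h ∈ H

/-- `N` is `H`-nested: every antichain in `N` with at least two elements has its
join (computed in `L`) outside of `H`. -/
def IsNestedIn (L : Type) [Lattice L] [OrderBot L] (H : Set L) (N : Set L) : Prop :=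
  ∀ S : Finset L, ↑S ⊆ N → 2 ≤ S.card → IsAntichain (· ≤ ·) (S : Set L) →
    S.sup id ∉ H

/-! The building-set isomorphism `[⊥, x] ≃o ∏_{g ∈ F(x)} [⊥, g]` sends each factor `g` to the
`g`-th unit vector. Hence distinct factors of `x` are disjoint, every element is the join of its
factors (so `F` is injective), and for `y ≤ x` the factors of `y` are the factors of the `y ⊓ g`,
`g ∈ F(x)`. A factor `g ≠ x_t` of `y ∨ h` is disjoint from `h ≤ x_t`, so its coordinate in
`y ∨ h` comes from `y` alone and `g ≤ y`. This makes `y' = y ⊓ x_t` a solution, and any solution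
`y' ≤ x_t` has `F(y') = F(y) \ (F(y ∨ h) \ {x_t})`, which determines `y'`. -/

open Function Set

section BuildingSet

variable {L : Type} [Lattice L] [BoundedOrder L]

theorem factorsOf_of_mem {G : Set L} {g : L} (hg : g ∈ G) : factorsOf G g = {g} := by
  ext k
  constructor
  · exact fun hk => hk.2.2 g hg le_rfl hk.2.1
  · rintro rfl
    exact ⟨hg, le_rfl, fun _ _ h₁ h₂ => le_antisymm h₂ h₁⟩

theorem exists_mem_factorsOf_ge [Finite L] {G : Set L} {x k : L} (hk : k ∈ G) (hkx : k ≤ x) :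
    ∃ g ∈ factorsOf G x, k ≤ g := by
  obtain ⟨g, hkg, hmax⟩ := (toFinite {m | m ∈ G ∧ m ≤ x}).exists_le_maximal
    (show k ∈ {m | m ∈ G ∧ m ≤ x} from ⟨hk, hkx⟩)
  refine ⟨g, ⟨hmax.prop.1, hmax.prop.2, fun m hm hmx hgm => ?_⟩, hkg⟩
  exact le_antisymm hgm (hmax.2 ⟨hm, hmx⟩ hgm)

variable [Fintype L] [DecidableEq L] {G : Set L}

namespace IsBuildingSet

theorem bot_lt_of_mem_factorsOf (hG : IsBuildingSet L G) {x g : L} (hg : g ∈ factorsOf G x) :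
    ⊥ < x :=
  (hG.1 g hg.1).trans_le hg.2.1

theorem exists_orderIso (hG : IsBuildingSet L G) {x : L} (hx : ⊥ < x) :
    ∃ φ : ((g : factorsOf G x) → Iic (g : L)) ≃o Iic x,
      ∀ g : factorsOf G x, φ.symm ⟨g, g.2.2.1⟩ = update ⊥ g ⊤ := by
  obtain ⟨φ, hφ⟩ := hG.2 x hx
  refine ⟨φ, fun g => φ.symm_apply_eq.2 ((hφ g).symm.trans (congrArg φ ?_))⟩
  funext k
  by_cases hk : k = g
  · subst hk; simp only [update_self, dite_true]; rfl
  · simp only [update_of_ne hk, dif_neg hk]; rfl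

theorem le_of_forall_mem_factorsOf_le (hG : IsBuildingSet L G) {z b : L}
    (hb : ∀ g ∈ factorsOf G z, g ≤ b) : z ≤ b := by
  rcases eq_bot_or_bot_lt z with rfl | hz
  · exact bot_le
  obtain ⟨φ, hφ⟩ := hG.exists_orderIso hz
  have htop : ⊤ ≤ φ.symm ⟨z ⊓ b, inf_le_left⟩ := fun g => by
    have hg : update ⊥ g ⊤ ≤ φ.symm ⟨z ⊓ b, inf_le_left⟩ := by
      rw [← hφ g, φ.symm.le_iff_le]
      exact le_inf g.2.2.1 (hb g g.2)
    simpa using hg g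
  rw [φ.le_symm_apply, map_top] at htop
  exact le_inf_iff.1 htop |>.2

theorem factorsOf_injective (hG : IsBuildingSet L G) : Injective (factorsOf G) := fun _ _ he =>
  le_antisymm (hG.le_of_forall_mem_factorsOf_le fun _ hg => (he ▸ hg).2.1)
    (hG.le_of_forall_mem_factorsOf_le fun _ hg => (he ▸ hg).2.1)

theorem disjoint_of_mem_factorsOf (hG : IsBuildingSet L G) {x g₁ g₂ : L}
    (hg₁ : g₁ ∈ factorsOf G x) (hg₂ : g₂ ∈ factorsOf G x) (hne : g₁ ≠ g₂) : Disjoint g₁ g₂ := by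
  obtain ⟨φ, hφ⟩ := hG.exists_orderIso (hG.bot_lt_of_mem_factorsOf hg₁)
  have hne' : (⟨g₁, hg₁⟩ : factorsOf G x) ≠ ⟨g₂, hg₂⟩ := fun h => hne (congrArg Subtype.val h)
  have hunit : Disjoint (update (⊥ : (g : factorsOf G x) → Iic (g : L)) ⟨g₁, hg₁⟩ ⊤)
      (update ⊥ ⟨g₂, hg₂⟩ ⊤) := by
    refine Pi.disjoint_iff.2 fun k => ?_
    by_cases hk : k = ⟨g₁, hg₁⟩
    · subst hk; simp [update_of_ne hne']
    · simp [update_of_ne hk]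
  rw [← hφ, ← hφ, disjoint_map_orderIso_iff, Iic.disjoint_iff] at hunit
  exact hunit

theorem le_of_mem_factorsOf_sup (hG : IsBuildingSet L G) {a b g : L}
    (hg : g ∈ factorsOf G (a ⊔ b)) (hgb : Disjoint g b) : g ≤ a := by
  obtain ⟨φ, hφ⟩ := hG.exists_orderIso (hG.bot_lt_of_mem_factorsOf hg)
  have hcodis : Codisjoint (φ.symm ⟨a, le_sup_left⟩) (φ.symm ⟨b, le_sup_right⟩) := by
    rw [codisjoint_map_orderIso_iff, Iic.codisjoint_iff]
  have hdis : Disjoint (update ⊥ ⟨g, hg⟩ ⊤) (φ.symm ⟨b, le_sup_right⟩) := by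
    rw [← hφ, disjoint_map_orderIso_iff, Iic.disjoint_iff]
    exact hgb
  have hb : φ.symm ⟨b, le_sup_right⟩ ⟨g, hg⟩ = ⊥ := by
    simpa using Pi.disjoint_iff.1 hdis ⟨g, hg⟩
  have ha : φ.symm ⟨a, le_sup_left⟩ ⟨g, hg⟩ = ⊤ := by
    simpa [hb] using Pi.codisjoint_iff.1 hcodis ⟨g, hg⟩
  have hunit : update ⊥ ⟨g, hg⟩ ⊤ ≤ φ.symm ⟨a, le_sup_left⟩ := by
    simp [update_le_iff, ha]
  rwa [← hφ, φ.symm.le_iff_le] at hunit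

theorem factorsOf_eq_biUnion_inf (hG : IsBuildingSet L G) {x y : L} (hyx : y ≤ x) :
    factorsOf G y = ⋃ g ∈ factorsOf G x, factorsOf G (y ⊓ g) := by
  ext k
  simp only [mem_iUnion, exists_prop]
  constructor
  · intro hk
    obtain ⟨g, hg, hkg⟩ := exists_mem_factorsOf_ge hk.1 (hk.2.1.trans hyx)
    exact ⟨g, hg, hk.1, le_inf hk.2.1 hkg, fun m hm hmyg => hk.2.2 m hm (hmyg.trans inf_le_left)⟩
  · rintro ⟨g, hg, hk⟩
    refine ⟨hk.1, hk.2.1.trans inf_le_left, fun m hm hmy hkm => ?_⟩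
    obtain ⟨g', hg', hmg'⟩ := exists_mem_factorsOf_ge hm (hmy.trans hyx)
    have hgg' : g = g' := by
      by_contra hne
      have hdis := (hG.disjoint_of_mem_factorsOf hg hg' hne).mono (hk.2.1.trans inf_le_right)
        (hkm.trans hmg')
      exact (hG.1 k hk.1).ne' (disjoint_self.1 hdis)
    exact hk.2.2 m hm (le_inf hmy (hgg' ▸ hmg')) hkm

end IsBuildingSet

end BuildingSet

theorem factors_of_join_with_atom_general {L : Type} [Lattice L] [BoundedOrder L] [Fintype L]
    [DecidableEq L] (G : Set L) (hG : IsBuildingSet L G)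
    (y : L) (h : L)
    (xt : L) (hxt : xt ∈ factorsOf G (y ⊔ h)) (hhxt : h ≤ xt) :
    ∃! y' : L, y' ≤ xt ∧
      factorsOf G y = (factorsOf G (y ⊔ h) \ {xt}) ∪ factorsOf G y' := by
  set F := factorsOf G (y ⊔ h)
  have hle : ∀ g ∈ F \ {xt}, g ≤ y := fun g hg =>
    hG.le_of_mem_factorsOf_sup hg.1 ((hG.disjoint_of_mem_factorsOf hg.1 hxt hg.2).mono_right hhxt)
  have hsplit : factorsOf G y = (F \ {xt}) ∪ factorsOf G (y ⊓ xt) := calc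
    factorsOf G y = ⋃ g ∈ insert xt (F \ {xt}), factorsOf G (y ⊓ g) := by
      rw [insert_sdiff_self_of_mem hxt]
      exact hG.factorsOf_eq_biUnion_inf le_sup_left
    _ = factorsOf G (y ⊓ xt) ∪ ⋃ g ∈ F \ {xt}, {g} := by
      rw [biUnion_insert]
      exact congrArg _ <| iUnion₂_congr fun g hg => by
        rw [inf_eq_right.2 (hle g hg), factorsOf_of_mem hg.1.1]
    _ = (F \ {xt}) ∪ factorsOf G (y ⊓ xt) := by rw [biUnion_of_singleton, union_comm]
  have hdisj : ∀ y' ≤ xt, (F \ {xt}) ∩ factorsOf G y' ⊆ ∅ := fun y' hy' g ⟨hgF, hg⟩ =>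
    hgF.2 (hgF.1.2.2 xt hxt.1 hxt.2.1 (hg.2.1.trans hy'))
  refine ⟨y ⊓ xt, ⟨inf_le_right, hsplit⟩, fun y' ⟨hy', hy'split⟩ => hG.factorsOf_injective ?_⟩
  rw [← union_sdiff_cancel_left (hdisj _ hy'), ← hy'split, hsplit,
    union_sdiff_cancel_left (hdisj _ inf_le_right)]

/-- let `G` be a building set in a geometric lattice `L`, `y > ⊥`,
and `h` an atom with `h ≰ y`.  If `x_t` is the factor of `y ∨ h` above `h`,
then there is a unique `y' ∈ [⊥, x_t]` with
`F(L,G;y) = (F(L,G;y∨h) \ {x_t}) ∪ F(L,G;y')`. -/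
theorem factors_of_join_with_atom {L : Type} [Lattice L] [BoundedOrder L] [Fintype L]
    [DecidableEq L] (hgeo : IsGeomLat L) (G : Set L) (hG : IsBuildingSet L G)
    (y : L) (hy : ⊥ < y) (h : L) (hh : IsAtom h) (hhy : ¬ h ≤ y)
    (xt : L) (hxt : xt ∈ factorsOf G (y ⊔ h)) (hhxt : h ≤ xt) :
    ∃! y' : L, y' ≤ xt ∧
      factorsOf G y = (factorsOf G (y ⊔ h) \ {xt}) ∪ factorsOf G y' :=
  factors_of_join_with_atom_general G hG y h xt hxt hhxt
end

section
/- Let H be a partial building set in a geometric lattice L, S ⊆ H, and g ∈ H ∖ S. If S is an antichain with at least two elements, ⋁S ≥ g, and g > h for all but at most one element h ∈ S, then S is not H-nested. -/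
/-!
If all of `S` lies below `g`, then `⋁S = g ∈ H`. Otherwise let `h₀` be the element of `S` not
below `g`, `T = S ∖ {h₀}` and `x = ⋁S = g ⊔ h₀`. If `x ∈ G`, the filter property puts `x` in `H`
(`g` is no atom, as it lies above the elements of `T`). Otherwise `g` and `h₀` lie below distinct
factors of `x`, and the product decomposition of `[⊥, x]` forces `⋁T = g`, since `⋁T ≤ g` and
`⋁T ⊔ h₀ = x`. As every element of `T` lies strictly below `g`, `T` has at least two elements,
so the antichain `T` has its join `g` in `H`.
-/

lemma Finset.exists_forall_mem_erase_of_not_forall {α : Type*} [DecidableEq α] {S : Finset α}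
    {p : α → Prop} (hmost : ∃ a₀, ∀ a ∈ S, a ≠ a₀ → p a) (hall : ¬ ∀ a ∈ S, p a) :
    ∃ a₀ ∈ S, ∀ a ∈ S.erase a₀, p a := by
  obtain ⟨a₀', hmost⟩ := hmost
  push Not at hall
  obtain ⟨a₀, ha₀S, ha₀⟩ := hall
  refine ⟨a₀, ha₀S, fun a ha => hmost a (Finset.mem_of_mem_erase ha) ?_⟩
  rintro rfl
  exact ha₀ (hmost a₀ ha₀S fun e => Finset.ne_of_mem_erase ha e.symm)

section

variable {L : Type} [Lattice L] [BoundedOrder L]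

lemma exists_mem_factorsOf_le [Finite L] {G : Set L} {a x : L} (haG : a ∈ G) (hax : a ≤ x) :
    ∃ f ∈ factorsOf G x, a ≤ f := by
  obtain ⟨f, ⟨⟨hfG, hfx⟩, haf⟩, hmax⟩ := Set.Finite.exists_maximalFor id
    {b | (b ∈ G ∧ b ≤ x) ∧ a ≤ b} (Set.toFinite _) ⟨a, ⟨haG, hax⟩, le_rfl⟩
  exact ⟨f, ⟨hfG, hfx, fun h hhG hhx hfh =>
    le_antisymm hfh (hmax ⟨⟨hhG, hhx⟩, haf.trans hfh⟩ hfh)⟩, haf⟩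

lemma two_le_card_of_forall_lt_sup {T : Finset L} (hbot : ⊥ < T.sup id)
    (hlt : ∀ a ∈ T, a < T.sup id) : 2 ≤ T.card := by
  by_contra! hcard
  obtain ⟨a, ha⟩ : T.Nonempty := by
    by_contra hT
    simp [Finset.not_nonempty_iff_eq_empty.mp hT] at hbot
  have hsup : T.sup id ≤ a :=
    Finset.sup_le fun b hb => (Finset.card_le_one.mp (by omega) b hb a ha).le
  exact (hlt a ha).not_ge hsup

section UnitVector

variable {ι : Type} [DecidableEq ι] (f : ι → L)

def unitVec (i : ι) (j : ι) : Set.Iic (f j) :=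
  if hj : j = i then ⟨f i, hj ▸ le_rfl⟩ else ⟨⊥, bot_le⟩

lemma unitVec_of_ne {i j : ι} (hj : j ≠ i) : unitVec f i j = ⊥ := dif_neg hj

variable {f}

lemma eq_unitVec_of_sup_eq_top {i j : ι} (hij : i ≠ j) {w v : ∀ k, Set.Iic (f k)}
    (hw : w ≤ unitVec f i) (hv : v ≤ unitVec f j) (hwv : w ⊔ v = ⊤) : w = unitVec f i := by
  refine le_antisymm hw fun k => ?_
  by_cases hk : k = i
  · subst hk
    have hvk : v k = ⊥ := le_bot_iff.mp (unitVec_of_ne f hij ▸ hv k)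
    have hwk : w k ⊔ v k = ⊤ := congrFun hwv k
    rw [hvk, sup_bot_eq] at hwk
    exact hwk ▸ le_top
  · exact unitVec_of_ne f hk ▸ bot_le

end UnitVector

section BuildingSet

variable [Fintype L] [DecidableEq L] {G : Set L}

lemma IsBuildingSet.eq_factor_of_sup_eq (hG : IsBuildingSet L G) {x : L} (hx : ⊥ < x)
    {F₁ F₂ : factorsOf G x} (hne : F₁ ≠ F₂) {a b : L} (ha : a ≤ F₁) (hb : b ≤ F₂)
    (hab : a ⊔ b = x) : a = F₁ := by
  obtain ⟨φ, hφ⟩ := hG.2 x hx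
  have hφunit (F : factorsOf G x) : φ.symm ⟨F, F.2.2.1⟩ = unitVec Subtype.val F := by
    rw [← hφ F]
    exact φ.symm_apply_apply _
  have hax : a ≤ x := ha.trans F₁.2.2.1
  have hbx : b ≤ x := hb.trans F₂.2.2.1
  have hw : φ.symm ⟨a, hax⟩ ≤ unitVec Subtype.val F₁ :=
    hφunit F₁ ▸ φ.symm.monotone (show (⟨a, hax⟩ : Set.Iic x) ≤ ⟨F₁, F₁.2.2.1⟩ from ha)
  have hv : φ.symm ⟨b, hbx⟩ ≤ unitVec Subtype.val F₂ :=
    hφunit F₂ ▸ φ.symm.monotone (show (⟨b, hbx⟩ : Set.Iic x) ≤ ⟨F₂, F₂.2.2.1⟩ from hb)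
  have hwv : φ.symm ⟨a, hax⟩ ⊔ φ.symm ⟨b, hbx⟩ = ⊤ := by
    rw [← φ.symm.map_sup, ← φ.symm.map_top]
    exact congrArg φ.symm (Subtype.ext hab)
  have hweq := eq_unitVec_of_sup_eq_top hne hw hv hwv
  rw [← hφunit F₁] at hweq
  exact congrArg Subtype.val (φ.symm.injective hweq)

lemma IsBuildingSet.eq_of_sup_eq_sup (hG : IsBuildingSet L G) {g h y : L} (hg : g ∈ G)
    (hh : h ∈ G) (hgh : g ⊔ h ∉ G) (hyg : y ≤ g) (hyh : y ⊔ h = g ⊔ h) : y = g := by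
  obtain ⟨f₁, hf₁, hgf₁⟩ := exists_mem_factorsOf_le hg (le_sup_left : g ≤ g ⊔ h)
  obtain ⟨f₂, hf₂, hhf₂⟩ := exists_mem_factorsOf_le hh (le_sup_right : h ≤ g ⊔ h)
  have hne : f₁ ≠ f₂ := by
    rintro rfl
    exact hgh (le_antisymm hf₁.2.1 (sup_le hgf₁ hhf₂) ▸ hf₁.1)
  have hyf₁ : y = f₁ := hG.eq_factor_of_sup_eq ((hG.1 g hg).trans_le le_sup_left)
    (F₁ := ⟨f₁, hf₁⟩) (F₂ := ⟨f₂, hf₂⟩) (fun e => hne (congrArg Subtype.val e))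
    (hyg.trans hgf₁) hhf₂ hyh
  exact le_antisymm hyg (hyf₁ ▸ hgf₁)

end BuildingSet

end

theorem not_nested_of_dominated_antichain_general {L : Type} [Lattice L] [BoundedOrder L]
    [Fintype L] [DecidableEq L] (G : Set L)
    (hG : IsBuildingSet L G) (H : Set L)
    (hH : IsPartialBuilding L G H)
    (S : Finset L) (hSH : ↑S ⊆ H) (g : L) (hg : g ∈ H)
    (hanti : IsAntichain (· ≤ ·) (S : Set L)) (hcard : 2 ≤ S.card)
    (hjoin : g ≤ S.sup id)
    (hmost : ∃ h₀ : L, ∀ h ∈ S, h ≠ h₀ → h < g) :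
    ¬ IsNestedIn L H ↑S := by
  intro hN
  have hS := hN S subset_rfl hcard hanti
  by_cases hall : ∀ h ∈ S, h < g
  · exact hS (le_antisymm (Finset.sup_le fun h hh => (hall h hh).le) hjoin ▸ hg)
  obtain ⟨h₀, hh₀S, hT⟩ := Finset.exists_forall_mem_erase_of_not_forall hmost hall
  set T := S.erase h₀
  have hTg : T.sup id ≤ g := Finset.sup_le fun h hh => (hT h hh).le
  have hSsup : S.sup id = T.sup id ⊔ h₀ := by
    rw [← Finset.insert_erase hh₀S, Finset.sup_insert, sup_comm]
    rfl
  have hgh₀ : g ⊔ h₀ = S.sup id := le_antisymm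
    (sup_le hjoin (Finset.le_sup (f := id) hh₀S)) (hSsup ▸ sup_le_sup_right hTg h₀)
  by_cases hxG : g ⊔ h₀ ∈ G
  · obtain ⟨h₁, hh₁⟩ : T.Nonempty := by
      rw [← Finset.card_pos, Finset.card_erase_of_mem hh₀S]; omega
    have hg_not_atom : ¬ IsAtom g := fun hat =>
      (hG.1 h₁ (hH.1 (hSH (Finset.mem_of_mem_erase hh₁)))).ne' (hat.2 h₁ (hT h₁ hh₁))
    exact hS (hgh₀ ▸ hH.2.2 g hg hg_not_atom _ hxG le_sup_left)
  have hTsup : T.sup id = g := hG.eq_of_sup_eq_sup (hH.1 hg) (hH.1 (hSH hh₀S)) hxG hTg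
    (hgh₀ ▸ hSsup).symm
  have hTcard : 2 ≤ T.card := two_le_card_of_forall_lt_sup (hTsup ▸ hG.1 g (hH.1 hg))
    (hTsup ▸ hT)
  exact hN T (Finset.coe_subset.mpr (Finset.erase_subset _ _)) hTcard
    (hanti.subset (Finset.coe_subset.mpr (Finset.erase_subset _ _))) (hTsup ▸ hg)

/-- let `H` be a partial building set in a geometric lattice `L`,
`S ⊆ H` and `g ∈ H ∖ S`.  If `S` is an antichain with at least two elements,
`⋁S ≥ g`, and `g > h` for all but at most one `h ∈ S`, then `S` is not
`H`-nested. -/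
theorem not_nested_of_dominated_antichain {L : Type} [Lattice L] [BoundedOrder L]
    [Fintype L] [DecidableEq L] (hgeo : IsGeomLat L) (G : Set L)
    (hG : IsBuildingSet L G) (htop : ⊤ ∈ G) (H : Set L)
    (hH : IsPartialBuilding L G H)
    (S : Finset L) (hSH : ↑S ⊆ H) (g : L) (hg : g ∈ H) (hgS : g ∉ S)
    (hanti : IsAntichain (· ≤ ·) (S : Set L)) (hcard : 2 ≤ S.card)
    (hjoin : g ≤ S.sup id)
    (hmost : ∃ h₀ : L, ∀ h ∈ S, h ≠ h₀ → h < g) :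
    ¬ IsNestedIn L H ↑S :=
  not_nested_of_dominated_antichain_general G hG H hH S hSH g hg hanti hcard hjoin hmost
end
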